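/- Let r₀, r₁ : PMF (Bool × Bool), with probabilities taken as real numbers. Define the four lower-bound candidates for π₁: l₀¹ := r₀ {(true, true)}, l₁¹ := r₁ {(true, true)}, l₀₁¹ := r₀ {p | p.2 = true} − r₁ {(true, false)} − r₁ {(false, true)}, l₁₀¹ := r₁ {p | p.2 = true} − r₀ {(true, false)} − r₀ {(false, true)}; and the four upper-bound candidates for π₀: u₀⁰ := 1 − r₀ {(false, false)}, u₁⁰ := 1 − r₁ {(false, false)}, u₀₁⁰ := r₀ {(false, true)} + r₀ {(true, false)} + r₁ {p | p.2 = true}, u₁₀⁰ := r₁ {(false, true)} + r₁ {(true, false)} + r₀ {p | p.2 = true}. Then the maximum of the sixteen differences l − u (l ranging over {l₀¹, l₁¹, l₀₁¹, l₁₀¹} and u over {u₀⁰, u₁⁰, u₀₁⁰, u₁₀⁰}) equals the maximum of the eight differences l₀¹ − u₀⁰, l₀¹ − u₁⁰, l₀¹ − u₀₁⁰, l₁¹ − u₀⁰, l₁¹ − u₁⁰, l₁¹ − u₁₀⁰, l₀₁¹ − u₁⁰, l₁₀¹ − u₀⁰. -/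
import Mathlib


/-- The probability (as a real number) that a PMF assigns to a set. -/
noncomputable def pr {α : Type*} (p : PMF α) (s : Set α) : ℝ := (p.toOuterMeasure s).toReal

lemma pr_nonneg {α : Type*} (p : PMF α) (s : Set α) : 0 ≤ pr p s := ENNReal.toReal_nonneg

lemma pr_fin (p : PMF (Bool × Bool)) (s : Set (Bool × Bool)) [DecidablePred (· ∈ s)] :
    pr p s = ∑ x : Bool × Bool, if x ∈ s then (p x).toReal else 0 := by
  rw [pr, PMF.toOuterMeasure_apply, tsum_fintype, ENNReal.toReal_sum]
  · refine Finset.sum_congr rfl fun x _ => ?_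
    by_cases h : x ∈ s <;> simp [Set.indicator, h]
  · intro x _
    by_cases h : x ∈ s <;> simp [Set.indicator, h, PMF.apply_ne_top]

lemma pr_split (p : PMF (Bool × Bool)) :
    pr p {q | q.2 = true} = pr p {(true, true)} + pr p {(false, true)} := by
  rw [pr_fin, pr_fin, pr_fin]
  simp [Fintype.sum_prod_type, Prod.ext_iff]

lemma pr_total (p : PMF (Bool × Bool)) :
    pr p {(true, true)} + pr p {(true, false)} + pr p {(false, true)} + pr p {(false, false)} = 1 := by
  have h : pr p Set.univ = 1 := by
    rw [pr, PMF.toOuterMeasure_apply, tsum_fintype]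
    have : ∑ x : Bool × Bool, (Set.univ : Set (Bool × Bool)).indicator p x = 1 := by
      simpa [Set.indicator_univ, tsum_fintype] using p.tsum_coe
    rw [this]; simp
  rw [pr_fin] at h
  rw [pr_fin, pr_fin, pr_fin, pr_fin]
  simp [Fintype.sum_prod_type, Prod.ext_iff] at h ⊢
  linarith

set_option maxHeartbeats 1000000 in

/-- Appendix B, lower bounds: for a binary instrument, the maximum of the sixteen
differences (lower bound on `π₁`) − (upper bound on `π₀`) equals the maximum of the
eight non-redundant Balke–Pearl differences. -/
theorem balke_pearl_lower_redundancy
    (r₀ r₁ : PMF (Bool × Bool))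
    (l₀ l₁ l₀₁ l₁₀ u₀ u₁ u₀₁ u₁₀ : ℝ)
    (hl₀ : l₀ = pr r₀ {(true, true)})
    (hl₁ : l₁ = pr r₁ {(true, true)})
    (hl₀₁ : l₀₁ = pr r₀ {p | p.2 = true} - pr r₁ {(true, false)} - pr r₁ {(false, true)})
    (hl₁₀ : l₁₀ = pr r₁ {p | p.2 = true} - pr r₀ {(true, false)} - pr r₀ {(false, true)})
    (hu₀ : u₀ = 1 - pr r₀ {(false, false)})
    (hu₁ : u₁ = 1 - pr r₁ {(false, false)})
    (hu₀₁ : u₀₁ = pr r₀ {(false, true)} + pr r₀ {(true, false)} + pr r₁ {p | p.2 = true})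
    (hu₁₀ : u₁₀ = pr r₁ {(false, true)} + pr r₁ {(true, false)} + pr r₀ {p | p.2 = true}) :
    max (l₀ - u₀)
      (max (l₀ - u₁)
      (max (l₀ - u₀₁)
      (max (l₀ - u₁₀)
      (max (l₁ - u₀)
      (max (l₁ - u₁)
      (max (l₁ - u₀₁)
      (max (l₁ - u₁₀)
      (max (l₀₁ - u₀)
      (max (l₀₁ - u₁)
      (max (l₀₁ - u₀₁)
      (max (l₀₁ - u₁₀)
      (max (l₁₀ - u₀)
      (max (l₁₀ - u₁)
      (max (l₁₀ - u₀₁)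
      (l₁₀ - u₁₀)))))))))))))))
    =
    max (l₀ - u₀)
      (max (l₀ - u₁)
      (max (l₀ - u₀₁)
      (max (l₁ - u₀)
      (max (l₁ - u₁)
      (max (l₁ - u₁₀)
      (max (l₀₁ - u₁)
      (l₁₀ - u₀))))))) := by
  have s0 := pr_split r₀
  have s1 := pr_split r₁
  have t0 := pr_total r₀
  have t1 := pr_total r₁
  have nb0 := pr_nonneg r₀ {(true, false)}
  have nc0 := pr_nonneg r₀ {(false, true)}
  have nb1 := pr_nonneg r₁ {(true, false)}
  have nc1 := pr_nonneg r₁ {(false, true)}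
  -- the eight redundancy inequalities
  have d1 : l₀ - u₁₀ ≤ l₁ - u₁ := by linarith
  have d2 : l₁ - u₀₁ ≤ l₀ - u₀ := by linarith
  have d3 : l₀₁ - u₀ ≤ l₁ - u₁ := by linarith
  have d4 : l₀₁ - u₀₁ ≤ l₀ - u₁ := by linarith
  have d5 : l₀₁ - u₁₀ ≤ l₁ - u₁ := by linarith
  have d6 : l₁₀ - u₁ ≤ l₀ - u₀ := by linarith
  have d7 : l₁₀ - u₀₁ ≤ l₀ - u₀ := by linarith
  have d8 : l₁₀ - u₁₀ ≤ l₁ - u₀ := by linarith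
  apply le_antisymm
  · have k1 : l₀ - u₀ ≤ max (l₀ - u₀) (max (l₀ - u₁) (max (l₀ - u₀₁) (max (l₁ - u₀) (max (l₁ - u₁) (max (l₁ - u₁₀) (max (l₀₁ - u₁) (l₁₀ - u₀))))))) := by
      simp only [le_max_iff, le_refl, true_or, or_true]
    have k2 : l₀ - u₁ ≤ max (l₀ - u₀) (max (l₀ - u₁) (max (l₀ - u₀₁) (max (l₁ - u₀) (max (l₁ - u₁) (max (l₁ - u₁₀) (max (l₀₁ - u₁) (l₁₀ - u₀))))))) := by
      simp only [le_max_iff, le_refl, true_or, or_true]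
    have k3 : l₀ - u₀₁ ≤ max (l₀ - u₀) (max (l₀ - u₁) (max (l₀ - u₀₁) (max (l₁ - u₀) (max (l₁ - u₁) (max (l₁ - u₁₀) (max (l₀₁ - u₁) (l₁₀ - u₀))))))) := by
      simp only [le_max_iff, le_refl, true_or, or_true]
    have k4 : l₁ - u₀ ≤ max (l₀ - u₀) (max (l₀ - u₁) (max (l₀ - u₀₁) (max (l₁ - u₀) (max (l₁ - u₁) (max (l₁ - u₁₀) (max (l₀₁ - u₁) (l₁₀ - u₀))))))) := by
      simp only [le_max_iff, le_refl, true_or, or_true]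
    have k5 : l₁ - u₁ ≤ max (l₀ - u₀) (max (l₀ - u₁) (max (l₀ - u₀₁) (max (l₁ - u₀) (max (l₁ - u₁) (max (l₁ - u₁₀) (max (l₀₁ - u₁) (l₁₀ - u₀))))))) := by
      simp only [le_max_iff, le_refl, true_or, or_true]
    have k6 : l₁ - u₁₀ ≤ max (l₀ - u₀) (max (l₀ - u₁) (max (l₀ - u₀₁) (max (l₁ - u₀) (max (l₁ - u₁) (max (l₁ - u₁₀) (max (l₀₁ - u₁) (l₁₀ - u₀))))))) := by
      simp only [le_max_iff, le_refl, true_or, or_true]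
    have k7 : l₀₁ - u₁ ≤ max (l₀ - u₀) (max (l₀ - u₁) (max (l₀ - u₀₁) (max (l₁ - u₀) (max (l₁ - u₁) (max (l₁ - u₁₀) (max (l₀₁ - u₁) (l₁₀ - u₀))))))) := by
      simp only [le_max_iff, le_refl, true_or, or_true]
    have k8 : l₁₀ - u₀ ≤ max (l₀ - u₀) (max (l₀ - u₁) (max (l₀ - u₀₁) (max (l₁ - u₀) (max (l₁ - u₁) (max (l₁ - u₁₀) (max (l₀₁ - u₁) (l₁₀ - u₀))))))) := by
      simp only [le_max_iff, le_refl, true_or, or_true]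
    repeat' apply max_le
    all_goals linarith
  · repeat' apply max_le
    all_goals simp only [le_max_iff, le_refl, true_or, or_true]
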